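/- Let R be a commutative ring with derivation D, a ∈ Rⁿ, b ∈ Rⁿ, and let A ⊆ R[X₁,...,Xₙ] be a set of polynomials vanishing at a. If τ(g)(a,b) = 0 for all g ∈ A (where τg = Σᵢ (∂g/∂Xᵢ)·Yᵢ + g^D), then τ(f)(a,b) = 0 for every f in the ideal generated by A that vanishes at a; more precisely, τ(h·g)(a,b) = 0 for all g ∈ A and h ∈ R[X₁,...,Xₙ], hence τ vanishes at (a,b) on the whole ideal generated by A. -/
import Mathlib


open MvPolynomial

/-- Applying `D` to each coefficient of a multivariate polynomial. -/
noncomputable def coeffMap {R S : Type*} [CommRing R] [CommRing S] {σ : Type*}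
    (D : R → S) (f : MvPolynomial σ R) : MvPolynomial σ S :=
  f.support.sum fun m => monomial m (D (coeff m f))

/-- The prolongation operator `τ f = ∑ i, (∂f/∂Xᵢ) * Yᵢ + f^D`, landing in the
polynomial ring `R[X₁,…,Xₙ,Y₁,…,Yₙ]` (variables indexed by `Fin n ⊕ Fin n`,
with `Sum.inl` the `X`'s and `Sum.inr` the `Y`'s). -/
noncomputable def tau {R : Type*} [CommRing R] {n : ℕ} (D : R → R)
    (f : MvPolynomial (Fin n) R) : MvPolynomial (Fin n ⊕ Fin n) R :=
  (∑ i, rename Sum.inl (pderiv i f) * X (Sum.inr i)) + rename Sum.inl (coeffMap D f)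

lemma coeff_coeffMap {R : Type*} [CommRing R] {σ : Type*} (D : R → R) (hD0 : D 0 = 0)
    (f : MvPolynomial σ R) (m : σ →₀ ℕ) : coeff m (coeffMap D f) = D (coeff m f) := by
  classical
  unfold coeffMap
  rw [MvPolynomial.coeff_sum]
  simp only [coeff_monomial]
  by_cases hm : m ∈ f.support
  · rw [Finset.sum_eq_single m]
    · simp
    · intro k _ hk; rw [if_neg hk]
    · intro h; exact absurd hm h
  · rw [Finset.sum_eq_zero]
    · rw [MvPolynomial.notMem_support_iff.mp hm, hD0]
    · intro k hk
      have : k ≠ m := fun h => hm (h ▸ hk)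
      simp [this]

lemma coeffMap_add {R : Type*} [CommRing R] {σ : Type*} (D : R → R)
    (hadd : ∀ x y : R, D (x + y) = D x + D y)
    (f g : MvPolynomial σ R) : coeffMap D (f + g) = coeffMap D f + coeffMap D g := by
  have hD0 : D 0 = 0 := by
    have := hadd 0 0; simpa using this.symm
  ext m
  simp [coeff_coeffMap D hD0, hadd]

lemma coeffMap_mul {R : Type*} [CommRing R] {σ : Type*} (D : R → R)
    (hadd : ∀ x y : R, D (x + y) = D x + D y)
    (hmul : ∀ x y : R, D (x * y) = D x * y + x * D y)
    (f g : MvPolynomial σ R) :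
    coeffMap D (f * g) = coeffMap D f * g + f * coeffMap D g := by
  classical
  let D' : R →+ R := AddMonoidHom.mk' D hadd
  have hD0 : D 0 = 0 := D'.map_zero
  ext m
  rw [coeff_coeffMap D hD0, coeff_add, coeff_mul, coeff_mul, coeff_mul]
  rw [show (D : R → R) = D' from rfl, map_sum]
  rw [← Finset.sum_add_distrib]
  refine Finset.sum_congr rfl fun p _ => ?_
  simp only [D', AddMonoidHom.mk'_apply]
  rw [hmul, coeff_coeffMap D hD0, coeff_coeffMap D hD0]

lemma tau_zero {R : Type*} [CommRing R] {n : ℕ} (D : R → R) :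
    tau D (0 : MvPolynomial (Fin n) R) = 0 := by
  simp [tau, coeffMap]

lemma tau_add {R : Type*} [CommRing R] {n : ℕ} (D : R → R)
    (hadd : ∀ x y : R, D (x + y) = D x + D y)
    (f g : MvPolynomial (Fin n) R) : tau D (f + g) = tau D f + tau D g := by
  unfold tau
  rw [coeffMap_add D hadd]
  simp only [map_add, add_mul, Finset.sum_add_distrib]
  ring

lemma tau_mul {R : Type*} [CommRing R] {n : ℕ} (D : R → R)
    (hadd : ∀ x y : R, D (x + y) = D x + D y)
    (hmul : ∀ x y : R, D (x * y) = D x * y + x * D y)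
    (f g : MvPolynomial (Fin n) R) :
    tau D (f * g) = rename Sum.inl f * tau D g + rename Sum.inl g * tau D f := by
  unfold tau
  rw [coeffMap_mul D hadd hmul, map_add]
  have h1 : ∀ i : Fin n, rename (Sum.inl : Fin n → Fin n ⊕ Fin n) (pderiv i (f * g)) * X (Sum.inr i)
      = rename Sum.inl f * (rename Sum.inl (pderiv i g) * X (Sum.inr i))
        + rename Sum.inl g * (rename Sum.inl (pderiv i f) * X (Sum.inr i)) := by
    intro i; rw [pderiv_mul, map_add, map_mul, map_mul]; ring
  rw [Finset.sum_congr rfl fun i _ => h1 i, Finset.sum_add_distrib, map_mul, map_mul,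
    ← Finset.mul_sum, ← Finset.mul_sum]
  ring

lemma eval_rename_inl {R : Type*} [CommRing R] {n : ℕ} (a b : Fin n → R)
    (f : MvPolynomial (Fin n) R) :
    eval (Sum.elim a b) (rename Sum.inl f) = eval a f := by
  rw [eval_rename]; rfl

/-- If `τ g` vanishes at `(a,b)` for all `g` in a set `A` of polynomials vanishing
at `a`, then `τ (h * g)` vanishes at `(a,b)` for all `h` and `g ∈ A`, and hence `τ f`
vanishes at `(a,b)` for every `f` in the ideal generated by `A`. -/
theorem stmt7 {R : Type*} [CommRing R] {n : ℕ}
    (D : R → R)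
    (hadd : ∀ x y : R, D (x + y) = D x + D y)
    (hmul : ∀ x y : R, D (x * y) = D x * y + x * D y)
    (a b : Fin n → R)
    (A : Set (MvPolynomial (Fin n) R))
    (hA0 : ∀ g ∈ A, eval a g = 0)
    (hA : ∀ g ∈ A, eval (Sum.elim a b) (tau D g) = 0) :
    (∀ (h : MvPolynomial (Fin n) R), ∀ g ∈ A,
      eval (Sum.elim a b) (tau D (h * g)) = 0) ∧
    (∀ f ∈ Ideal.span A, eval (Sum.elim a b) (tau D f) = 0) := by
  constructor
  · intro h g hg
    rw [tau_mul D hadd hmul]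
    rw [map_add, map_mul, map_mul, eval_rename_inl, eval_rename_inl,
      hA g hg, hA0 g hg]
    ring
  · intro f hf
    have key : eval a f = 0 ∧ eval (Sum.elim a b) (tau D f) = 0 := by
      refine Submodule.span_induction ?_ ?_ ?_ ?_ hf
      · intro g hg; exact ⟨hA0 g hg, hA g hg⟩
      · exact ⟨by simp, by rw [tau_zero]; simp⟩
      · intro x y _ _ hx hy
        refine ⟨by rw [map_add, hx.1, hy.1, add_zero], ?_⟩
        rw [tau_add D hadd, map_add, hx.2, hy.2, add_zero]
      · intro r x _ hx
        refine ⟨by rw [smul_eq_mul, map_mul, hx.1, mul_zero], ?_⟩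
        rw [smul_eq_mul, tau_mul D hadd hmul, map_add, map_mul, map_mul,
          eval_rename_inl, eval_rename_inl, hx.1, hx.2]
        ring
    exact key.2
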